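/- Let n be a positive integer, let b_1, …, b_n be nonzero complex numbers with b_{n+1-i} equal to the complex conjugate of b_i for all i = 1, …, n, and let z_1, …, z_n be distinct complex numbers of absolute value 1, none equal to 1, with z_{n+1-i} equal to the complex conjugate of z_i for all i = 1, …, n. Then liminf_{k→∞} ∑_{j=1}^n b_j z_j^k ≤ −(1/n) ∑_{j=1}^n |b_j|. -/

import Mathlib

/-!
Write `S k = ∑ j, b j * z j ^ k`; the conjugate symmetry makes it real. Suppose `c ≤ S k` for all
large `k`; shifting `k` replaces `b j` by `b j * z j ^ m`, so we may assume this for all `k`.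
Fix `i`, put `ζ = conj (z i)` and pick `‖w‖ ≤ 1` with `b i * w = -‖b i‖`. The numbers
`(S k - c) * (1 + w * ζ ^ k)` have nonnegative real part. Expanded, they are a combination of
powers `α ^ k` with `‖α‖ ≤ 1`, whose Cesàro means tend to `1` if `α = 1` and to `0` otherwise;
since the `z j` are distinct and `≠ 1`, only the constant and the term with `z i * ζ = 1`
survive, and the means tend to `b i * w - c = -‖b i‖ - c`. Hence `c ≤ -‖b i‖`, so
`liminf S ≤ -‖b i‖` for every `i`, and averaging over `i` gives the bound.
-/

open Complex Filter Finset ComplexConjugate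

open scoped BigOperators Topology

noncomputable def cesaroMean (N : ℕ) : (ℕ → ℂ) →ₗ[ℂ] ℂ :=
  (N : ℂ)⁻¹ • ∑ k ∈ range N, LinearMap.proj k

theorem cesaroMean_apply (N : ℕ) (g : ℕ → ℂ) :
    cesaroMean N g = (N : ℂ)⁻¹ * ∑ k ∈ range N, g k := by
  simp [cesaroMean]

theorem cesaroMean_re_nonneg {g : ℕ → ℂ} (hg : ∀ k, 0 ≤ (g k).re) (N : ℕ) :
    0 ≤ (cesaroMean N g).re := by
  rw [cesaroMean_apply, ← ofReal_natCast, ← ofReal_inv, re_ofReal_mul, re_sum]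
  exact mul_nonneg (by positivity) (sum_nonneg fun k _ => hg k)

theorem norm_geom_sum_le {α : ℂ} (hα : ‖α‖ ≤ 1) (hα1 : α ≠ 1) (N : ℕ) :
    ‖∑ k ∈ range N, α ^ k‖ ≤ 2 / ‖α - 1‖ := by
  rw [geom_sum_eq hα1, norm_div]
  gcongr
  calc ‖α ^ N - 1‖ ≤ ‖α ^ N‖ + ‖(1 : ℂ)‖ := norm_sub_le _ _
    _ ≤ 2 := by rw [norm_pow, norm_one]; linarith [pow_le_one₀ (norm_nonneg α) hα (n := N)]

theorem tendsto_cesaroMean_pow {α : ℂ} (hα : ‖α‖ ≤ 1) :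
    Tendsto (fun N => cesaroMean N (α ^ ·)) atTop (𝓝 (if α = 1 then 1 else 0)) := by
  simp only [cesaroMean_apply]
  split_ifs with hα1
  · refine tendsto_const_nhds.congr' ?_
    filter_upwards [eventually_ne_atTop 0] with N hN
    simp [hα1, hN]
  · exact tendsto_inv_atTop_nhds_zero_nat.zero_mul_isBoundedUnder_le
      (isBoundedUnder_of ⟨_, norm_geom_sum_le hα hα1⟩)

theorem tendsto_cesaroMean_sum_mul_pow {ι : Type*} {s : Finset ι} {a α : ι → ℂ}
    (hα : ∀ j ∈ s, ‖α j‖ ≤ 1) :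
    Tendsto (fun N => cesaroMean N fun k => ∑ j ∈ s, a j * α j ^ k) atTop
      (𝓝 (∑ j ∈ s with α j = 1, a j)) := by
  have hsum : (fun k => ∑ j ∈ s, a j * α j ^ k) = ∑ j ∈ s, a j • (α j ^ ·) := by
    funext k
    simp [Finset.sum_apply]
  simp only [hsum, map_sum, map_smul, sum_filter]
  refine tendsto_finsetSum _ fun j hj => ?_
  simpa [smul_eq_mul] using (tendsto_cesaroMean_pow (hα j hj)).const_mul (a j)

theorem exists_norm_le_one_mul_eq_neg_norm (u : ℂ) : ∃ w : ℂ, ‖w‖ ≤ 1 ∧ u * w = -‖u‖ := by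
  rcases eq_or_ne u 0 with rfl | hu
  · exact ⟨0, by simp⟩
  have hu' : (‖u‖ : ℂ) ≠ 0 := ofReal_ne_zero.2 (norm_ne_zero_iff.2 hu)
  refine ⟨-conj u / ‖u‖, ?_, ?_⟩
  · rw [norm_div, norm_neg, norm_conj, norm_real, norm_norm, div_self (norm_ne_zero_iff.2 hu)]
  · rw [mul_div_assoc', mul_neg, mul_conj', div_eq_iff hu']
    ring

theorem mul_conj_eq_one_iff {a x : ℂ} (ha : ‖a‖ = 1) : x * conj a = 1 ↔ x = a := by
  have ha0 : conj a ≠ 0 := by rw [← norm_ne_zero_iff, norm_conj, ha]; exact one_ne_zero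
  rw [mul_eq_one_iff_eq_inv₀ ha0, ← inv_eq_conj ha, inv_inv]

section PowerSum

variable {ι : Type*} {s : Finset ι} {b z : ι → ℂ}

theorem tendsto_cesaroMean_power_sum (hz : ∀ j ∈ s, ‖z j‖ ≤ 1) (hz1 : ∀ j ∈ s, z j ≠ 1) :
    Tendsto (fun N => cesaroMean N fun k => ∑ j ∈ s, b j * z j ^ k) atTop (𝓝 0) := by
  convert tendsto_cesaroMean_sum_mul_pow hz
  exact (sum_eq_zero fun j hj => absurd (mem_filter.1 hj).2 (hz1 j (mem_filter.1 hj).1)).symm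

theorem tendsto_cesaroMean_power_sum_mul_conj_pow (hz : ∀ j ∈ s, ‖z j‖ = 1)
    (hinj : Set.InjOn z s) {i : ι} (hi : i ∈ s) :
    Tendsto (fun N => cesaroMean N fun k => ∑ j ∈ s, b j * (z j * conj (z i)) ^ k) atTop
      (𝓝 (b i)) := by
  convert tendsto_cesaroMean_sum_mul_pow fun j hj => ?_
  · rw [show s.filter (z · * conj (z i) = 1) = {i} from ?_, sum_singleton]
    ext j
    simp only [mem_filter, mem_singleton, mul_conj_eq_one_iff (hz i hi)]
    exact ⟨fun ⟨hj, hzj⟩ => hinj hj hi hzj, by rintro rfl; exact ⟨hi, rfl⟩⟩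
  · rw [norm_mul, hz j hj, norm_conj, hz i hi, one_mul]

theorem le_neg_norm_of_forall_le_re_power_sum (hz : ∀ j ∈ s, ‖z j‖ = 1)
    (hz1 : ∀ j ∈ s, z j ≠ 1) (hinj : Set.InjOn z s)
    (hreal : ∀ k, (∑ j ∈ s, b j * z j ^ k).im = 0) {c : ℝ}
    (hc : ∀ k, c ≤ (∑ j ∈ s, b j * z j ^ k).re) {i : ι} (hi : i ∈ s) :
    c ≤ -‖b i‖ := by
  obtain ⟨w, hw, hbw⟩ := exists_norm_le_one_mul_eq_neg_norm (b i)
  set S : ℕ → ℂ := fun k => ∑ j ∈ s, b j * z j ^ k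
  set ζ := conj (z i)
  have hζ : ‖ζ‖ = 1 := by rw [norm_conj, hz i hi]
  have hζ1 : ζ ≠ 1 := fun h => hz1 i hi (by simpa [ζ] using congrArg conj h)
  have hre_nonneg : ∀ k, 0 ≤ ((S k - c) * (1 + w * ζ ^ k)).re := by
    intro k
    have hS : S k - c = ((S k).re - c : ℝ) := Complex.ext (by simp) (by simp [S, hreal k])
    have hwζ : ‖w * ζ ^ k‖ ≤ 1 := by rwa [norm_mul, norm_pow, hζ, one_pow, mul_one]
    rw [hS, re_ofReal_mul, add_re, one_re]
    exact mul_nonneg (sub_nonneg.2 (hc k))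
      (by linarith [neg_abs_le (w * ζ ^ k).re, abs_re_le_norm (w * ζ ^ k)])
  have hexpand : (fun k => (S k - c) * (1 + w * ζ ^ k)) =
      S + w • (fun k => ∑ j ∈ s, b j * (z j * ζ) ^ k) - (c : ℂ) • (1 ^ ·) - (c * w) • (ζ ^ ·) := by
    funext k
    simp only [S, Pi.add_apply, Pi.sub_apply, Pi.smul_apply, smul_eq_mul, one_pow, mul_pow,
      ← mul_assoc, ← sum_mul]
    ring
  have hlim : Tendsto (fun N => cesaroMean N fun k => (S k - c) * (1 + w * ζ ^ k)) atTop
      (𝓝 (b i * w - c)) := by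
    rw [hexpand]
    simp only [map_add, map_sub, map_smul]
    convert (((tendsto_cesaroMean_power_sum (fun j hj => (hz j hj).le) hz1).add
      ((tendsto_cesaroMean_power_sum_mul_conj_pow hz hinj hi).const_smul w)).sub
      ((tendsto_cesaroMean_pow (norm_one (α := ℂ)).le).const_smul (c : ℂ))).sub
      ((tendsto_cesaroMean_pow hζ.le).const_smul ((c : ℂ) * w)) using 2
    rw [if_pos rfl, if_neg hζ1]
    simp only [smul_eq_mul]
    ring
  have hre_lim := ge_of_tendsto' ((continuous_re.tendsto _).comp hlim)
    fun N => cesaroMean_re_nonneg hre_nonneg N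
  rw [hbw, sub_re, neg_re, ofReal_re, ofReal_re] at hre_lim
  linarith

theorem liminf_re_power_sum_le_neg_norm (hz : ∀ j ∈ s, ‖z j‖ = 1)
    (hz1 : ∀ j ∈ s, z j ≠ 1) (hinj : Set.InjOn z s)
    (hreal : ∀ k, (∑ j ∈ s, b j * z j ^ k).im = 0) {i : ι} (hi : i ∈ s) :
    liminf (fun k => (∑ j ∈ s, b j * z j ^ k).re) atTop ≤ -‖b i‖ := by
  have hbdd : IsBoundedUnder (· ≥ ·) atTop fun k => (∑ j ∈ s, b j * z j ^ k).re := by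
    refine isBoundedUnder_of ⟨-∑ j ∈ s, ‖b j‖, fun k => ?_⟩
    calc -∑ j ∈ s, ‖b j‖ = -∑ j ∈ s, ‖b j * z j ^ k‖ := by
          simp +contextual [norm_pow, hz]
      _ ≤ -‖∑ j ∈ s, b j * z j ^ k‖ := neg_le_neg (norm_sum_le _ _)
      _ ≤ _ := neg_le_of_abs_le (abs_re_le_norm _)
  refine liminf_le_of_le hbdd fun c hc => ?_
  obtain ⟨m, hm⟩ := eventually_atTop.1 hc
  have hshift : ∀ k, ∑ j ∈ s, b j * z j ^ m * z j ^ k = ∑ j ∈ s, b j * z j ^ (k + m) :=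
    fun k => sum_congr rfl fun j _ => by ring
  simpa [norm_mul, norm_pow, hz i hi] using
    le_neg_norm_of_forall_le_re_power_sum (b := fun j => b j * z j ^ m) hz hz1 hinj
      (fun k => hshift k ▸ hreal (k + m)) (fun k => hshift k ▸ hm (k + m) (by omega)) hi

theorem im_sum_mul_pow_eq_zero {σ : ι → ι} (hσ : ∀ j ∈ s, σ j ∈ s)
    (hσσ : ∀ j ∈ s, σ (σ j) = j) (hb : ∀ j ∈ s, b (σ j) = conj (b j))
    (hz : ∀ j ∈ s, z (σ j) = conj (z j)) (k : ℕ) :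
    (∑ j ∈ s, b j * z j ^ k).im = 0 := by
  rw [← conj_eq_iff_im, map_sum]
  exact sum_nbij' σ σ hσ hσ hσσ hσσ fun j hj => by rw [hb j hj, hz j hj, map_mul, map_pow]

end PowerSum

theorem one_sided_power_sum_cor_general
    (n : ℕ) (hn : 1 ≤ n) (b z : ℕ → ℂ)
    (hbconj : ∀ i ∈ Finset.Icc 1 n, b (n + 1 - i) = conj (b i))
    (hzabs : ∀ i ∈ Finset.Icc 1 n, ‖z i‖ = 1)
    (hz1 : ∀ i ∈ Finset.Icc 1 n, z i ≠ 1)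
    (hzdist : Set.InjOn z (Set.Icc 1 n))
    (hzconj : ∀ i ∈ Finset.Icc 1 n, z (n + 1 - i) = conj (z i)) :
    Filter.liminf (fun k : ℕ => (∑ j ∈ Finset.Icc 1 n, b j * z j ^ k).re) Filter.atTop ≤
      -(1 / (n : ℝ)) * ∑ j ∈ Finset.Icc 1 n, ‖b j‖ := by
  have hreflect : ∀ i ∈ Icc 1 n, n + 1 - i ∈ Icc 1 n := fun i hi => by
    simp only [mem_Icc] at hi ⊢; omega
  have hreflect_reflect : ∀ i ∈ Icc 1 n, n + 1 - (n + 1 - i) = i := fun i hi => by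
    simp only [mem_Icc] at hi; omega
  have hreal := im_sum_mul_pow_eq_zero hreflect hreflect_reflect hbconj hzconj
  have hinj : Set.InjOn z (Icc 1 n : Finset ℕ) := by rwa [coe_Icc]
  calc _ ≤ 𝔼 i ∈ Icc 1 n, -‖b i‖ := le_expect (nonempty_Icc.2 hn) fun i hi =>
        liminf_re_power_sum_le_neg_norm hzabs hz1 hinj hreal hi
    _ = _ := by rw [expect_eq_sum_div_card, Nat.card_Icc, Nat.add_sub_cancel, sum_neg_distrib]; ring

/-- **Corollary 1 (Beukers–Tijdeman).**
Under the hypotheses of Theorem 1,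
`liminf_{k→∞} ∑ j, b j * z j ^ k ≤ -(1/n) ∑ j |b j|`. -/
theorem one_sided_power_sum_cor
    (n : ℕ) (hn : 1 ≤ n) (b z : ℕ → ℂ)
    (hb0 : ∀ i ∈ Finset.Icc 1 n, b i ≠ 0)
    (hbconj : ∀ i ∈ Finset.Icc 1 n, b (n + 1 - i) = conj (b i))
    (hzabs : ∀ i ∈ Finset.Icc 1 n, ‖z i‖ = 1)
    (hz1 : ∀ i ∈ Finset.Icc 1 n, z i ≠ 1)
    (hzdist : Set.InjOn z (Set.Icc 1 n))
    (hzconj : ∀ i ∈ Finset.Icc 1 n, z (n + 1 - i) = conj (z i)) :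
    Filter.liminf (fun k : ℕ => (∑ j ∈ Finset.Icc 1 n, b j * z j ^ k).re) Filter.atTop ≤
      -(1 / (n : ℝ)) * ∑ j ∈ Finset.Icc 1 n, ‖b j‖ :=
  one_sided_power_sum_cor_general n hn b z hbconj hzabs hz1 hzdist hzconj
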